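/- arXiv:cs/0007039 — 5 statements merged into one kernel-verified Lean document; each statement's English description precedes it below -/
import Mathlib

section
/- Let |~ be a preferential inference relation on L based on ⊢. Let Γ = {¬γ : γ |~ ⊥} and define α ⊢' β iff Γ ∪ {α} ⊢ β. Then |~ satisfies Supraclassicality with respect to ⊢' (α ⊢' β implies α |~ β), Left Logical Equivalence with respect to ⊢' (α ⊢' β, β ⊢' α and α |~ γ imply β |~ γ), Right Weakening with respect to ⊢' (α |~ β and ⊢' β → γ imply α |~ γ), and Consistency Preservation with respect to ⊢' (α |~ ⊥ implies α ⊢' ⊥); hence |~ is a preferential inference relation based on ⊢' satisfying Consistency Preservation. -/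
/-- Propositional formulas over a set `V` of propositional variables,
closed under ∧, ∨, ¬, → and containing ⊤ and ⊥. -/
inductive Form (V : Type) : Type
  | var : V → Form V
  | top : Form V
  | bot : Form V
  | and : Form V → Form V → Form V
  | or : Form V → Form V → Form V
  | not : Form V → Form V
  | imp : Form V → Form V → Form V

/-- Classical boolean evaluation of a formula under a valuation. -/
def Form.eval {V : Type} (v : V → Bool) : Form V → Bool
  | .var p => v p
  | .top => true
  | .bot => false
  | .and a b => (Form.eval v a) && (Form.eval v b)
  | .or a b => (Form.eval v a) || (Form.eval v b)
  | .not a => !(Form.eval v a)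
  | .imp a b => !(Form.eval v a) || (Form.eval v b)

/-- Classical (semantic) propositional entailment. -/
def Form.Sem {V : Type} (X : Set (Form V)) (β : Form V) : Prop :=
  ∀ v : V → Bool, (∀ φ ∈ X, Form.eval v φ = true) → Form.eval v β = true

/-- An entailment relation between sets of formulas and formulas that includes
classical propositional logic, is compact, satisfies the deduction theorem,
and satisfies disjunction in premises. -/
structure Entails (V : Type) where
  ent : Set (Form V) → Form V → Prop
  includes_classical : ∀ X β, Form.Sem X β → ent X β
  compact : ∀ X β, ent X β → ∃ Y, Y ⊆ X ∧ Y.Finite ∧ ent Y β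
  deduction : ∀ X α β, ent (insert α X) β ↔ ent X (Form.imp α β)
  disj_prem : ∀ X α γ β,
    ent (insert α X) β → ent (insert γ X) β → ent (insert (Form.or α γ) X) β

/-- `R` is an inference relation based on the entailment `ent`:
Supraclassicality, Left Logical Equivalence, Right Weakening, And. -/
def IsInferenceRel {V : Type} (ent : Set (Form V) → Form V → Prop)
    (R : Form V → Form V → Prop) : Prop :=
  (∀ α β, ent {α} β → R α β) ∧
  (∀ α β γ, ent {α} β → ent {β} α → R α γ → R β γ) ∧
  (∀ α β γ, R α β → ent ∅ (Form.imp β γ) → R α γ) ∧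
  (∀ α β γ, R α β → R α γ → R α (Form.and β γ))

/-- `R` is a preferential inference relation based on `ent`:
an inference relation satisfying Cut, Cautious Monotonicity and Or. -/
def IsPreferential {V : Type} (ent : Set (Form V) → Form V → Prop)
    (R : Form V → Form V → Prop) : Prop :=
  IsInferenceRel ent R ∧
  (∀ α β γ, R α β → R (Form.and α β) γ → R α γ) ∧
  (∀ α β γ, R α β → R α γ → R (Form.and α β) γ) ∧
  (∀ α β γ, R α γ → R β γ → R (Form.or α β) γ)

/-- `R` is a rational inference relation based on `ent`:
preferential plus Rational Monotonicity. -/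
def IsRational {V : Type} (ent : Set (Form V) → Form V → Prop)
    (R : Form V → Form V → Prop) : Prop :=
  IsPreferential ent R ∧
  (∀ α β γ, ¬ R α (Form.not β) → R α γ → R (Form.and α β) γ)

/-- Consistency Preservation of `R` with respect to `ent`. -/
def ConsPres {V : Type} (ent : Set (Form V) → Form V → Prop)
    (R : Form V → Form V → Prop) : Prop :=
  ∀ α, R α Form.bot → ent {α} Form.bot

/-- A rational ordering: Transitivity, Dominance and Conjunctiveness. -/
def IsRationalOrdering {V : Type} (ent : Set (Form V) → Form V → Prop)
    (le : Form V → Form V → Prop) : Prop :=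
  (∀ α β γ, le α β → le β γ → le α γ) ∧
  (∀ α β, ent {α} β → le α β) ∧
  (∀ α β, le α (Form.and α β) ∨ le β (Form.and α β))

/-- An expectation ordering: a rational ordering whose top is exactly
the consequences of the empty set. -/
def IsExpectationOrdering {V : Type} (ent : Set (Form V) → Form V → Prop)
    (le : Form V → Form V → Prop) : Prop :=
  IsRationalOrdering ent le ∧ ∀ α, (∀ β, le β α) → ent ∅ α

/-- Strict part of an ordering. -/
def ltOf {V : Type} (le : Form V → Form V → Prop) (α β : Form V) : Prop :=
  le α β ∧ ¬ le β α

/-- The map O from consequence relations to orderings: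
`α ≤ β` iff `¬(α ∧ β) |~ ⊥` or not `¬(α ∧ β) |~ α`. -/
def Omap {V : Type} (R : Form V → Form V → Prop) (α β : Form V) : Prop :=
  R (Form.not (Form.and α β)) Form.bot ∨ ¬ R (Form.not (Form.and α β)) α

/-- The map C from orderings to consequence relations:
`α |~ γ` iff either `β ≤ ¬α` for all `β`, or there is `β` with
`α ∧ β ⊢ γ` and `¬α < β`. -/
def Cmap {V : Type} (ent : Set (Form V) → Form V → Prop)
    (le : Form V → Form V → Prop) (α γ : Form V) : Prop :=
  (∀ β, le β (Form.not α)) ∨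
  (∃ β, ent {Form.and α β} γ ∧ ltOf le (Form.not α) β)

/-- The ranked consequence operator based on `ent` induced by a family
`B` of sets of formulas: `α |~ β` iff either `α |~_i β` for some `i`
(i.e. not `B i ⊢ ¬α` and `B i ∪ {α} ⊢ β`), or `⊤ |~_i ¬α` for all `i`. -/
def rankedOp {V I : Type} (ent : Set (Form V) → Form V → Prop)
    (B : I → Set (Form V)) (α β : Form V) : Prop :=
  (∃ i, ¬ ent (B i) (Form.not α) ∧ ent (insert α (B i)) β) ∨
  (∀ i, ¬ ent (B i) (Form.not Form.top) ∧ ent (insert Form.top (B i)) (Form.not α))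

/-- The ordering induced by a ranked consequence operator:
`α ≤ β` iff for all `i`, `B i ⊢ α` implies `B i ⊢ β`. -/
def inducedOrder {V I : Type} (ent : Set (Form V) → Form V → Prop)
    (B : I → Set (Form V)) (α β : Form V) : Prop :=
  ∀ i, ent (B i) α → ent (B i) β

/-! Every formula `α` defeasibly entails `¬γ` whenever `γ |~ ⊥`: Cautious Monotonicity gives
`γ ∧ α |~ ⊥`, and Or with the trivial `α ∧ ¬γ |~ ¬γ` gives `α |~ ¬γ`. So `α |~` is closed under
modus ponens with premises from `Γ`, and by compactness and the deduction theorem every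
`⊢'`-consequence reduces to finitely many such steps, which yields Supraclassicality and Right
Weakening for `⊢'`. Left Logical Equivalence for `⊢'` then follows from Cautious Monotonicity and
Cut, and Consistency Preservation holds because `¬α ∈ Γ` whenever `α |~ ⊥`. -/

namespace Entails

variable {V : Type} (E : Entails V)

theorem ent_empty_of_eval {φ : Form V} (h : ∀ v, Form.eval v φ = true) : E.ent ∅ φ :=
  E.includes_classical _ _ fun v _ => h v

theorem ent_singleton_of_eval {α β : Form V}
    (h : ∀ v, Form.eval v α = true → Form.eval v β = true) : E.ent {α} β :=
  E.includes_classical _ _ fun v hv => h v (hv α rfl)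

end Entails

namespace IsPreferential

variable {V : Type} {E : Entails V} {R : Form V → Form V → Prop}

theorem refl (hR : IsPreferential E.ent R) (α : Form V) : R α α :=
  hR.1.1 α α (E.ent_singleton_of_eval fun _ h => h)

theorem and_comm (hR : IsPreferential E.ent R) {α β γ : Form V} (h : R (Form.and α β) γ) :
    R (Form.and β α) γ :=
  hR.1.2.1 _ _ _
    (E.ent_singleton_of_eval fun v h => by simp_all [Form.eval])
    (E.ent_singleton_of_eval fun v h => by simp_all [Form.eval]) h

theorem mp (hR : IsPreferential E.ent R) {α φ τ : Form V} (hφ : R α φ)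
    (himp : R α (Form.imp φ τ)) : R α τ :=
  hR.1.2.2.1 α _ τ (hR.1.2.2.2 α φ _ hφ himp) <| E.ent_empty_of_eval fun v => by
    simp only [Form.eval]
    cases Form.eval v φ <;> cases Form.eval v τ <;> rfl

theorem not_of_bot (hR : IsPreferential E.ent R) {γ : Form V} (hγ : R γ Form.bot)
    (α : Form V) : R α (Form.not γ) := by
  have hγα : R γ α := hR.1.2.2.1 γ Form.bot α hγ (E.ent_empty_of_eval fun _ => rfl)
  have hαγ : R (Form.and α γ) (Form.not γ) :=
    hR.1.2.2.1 _ Form.bot _ (hR.and_comm (hR.2.2.1 γ α Form.bot hγα hγ))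
      (E.ent_empty_of_eval fun _ => rfl)
  have hαnγ : R (Form.and α (Form.not γ)) (Form.not γ) :=
    hR.1.1 _ _ (E.ent_singleton_of_eval fun v h => by simp_all [Form.eval])
  refine hR.1.2.1 _ α _ ?_ ?_ (hR.2.2.2 _ _ _ hαγ hαnγ)
  · exact E.ent_singleton_of_eval fun v h => by
      cases hv : Form.eval v γ <;> simp_all [Form.eval]
  · exact E.ent_singleton_of_eval fun v h => by
      cases hv : Form.eval v γ <;> simp_all [Form.eval]

theorem rightWeakening_of_premises_finite (hR : IsPreferential E.ent R)
    {α φ τ : Form V} {Y : Set (Form V)} (hY : Y.Finite) (hYR : ∀ ψ ∈ Y, R α ψ)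
    (hent : E.ent Y (Form.imp φ τ)) (hφ : R α φ) : R α τ := by
  induction Y, hY using Set.Finite.induction_on generalizing φ τ with
  | empty => exact hR.1.2.2.1 α φ τ hφ hent
  | @insert ψ Y _ _ ih =>
    have hφτ : R α (Form.imp φ τ) :=
      ih (fun χ hχ => hYR χ (Set.mem_insert_of_mem ψ hχ)) ((E.deduction Y ψ _).mp hent)
        (hYR ψ (Set.mem_insert ψ Y))
    exact hR.mp hφ hφτ

theorem rightWeakening_of_premises (hR : IsPreferential E.ent R) {α φ τ : Form V}
    {Γ : Set (Form V)}
    (hΓR : ∀ ψ ∈ Γ, R α ψ) (hent : E.ent Γ (Form.imp φ τ)) (hφ : R α φ) : R α τ := by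
  obtain ⟨Y, hYΓ, hY, hYent⟩ := E.compact Γ _ hent
  exact hR.rightWeakening_of_premises_finite hY (fun ψ hψ => hΓR ψ (hYΓ hψ)) hYent hφ

theorem reciprocity (hR : IsPreferential E.ent R) {α β γ : Form V} (hαβ : R α β)
    (hβα : R β α) (hαγ : R α γ) : R β γ :=
  hR.2.1 β α γ hβα (hR.and_comm (hR.2.2.1 α β γ hαβ hαγ))

end IsPreferential

/-- shifting the underlying entailment to `⊢'` (adding as premises
the negations of all formulas entailing ⊥), `|~` becomes a preferential
inference relation based on `⊢'` satisfying Consistency Preservation. -/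
theorem stmt_2 {V : Type} (E : Entails V) (R : Form V → Form V → Prop)
    (hR : IsPreferential E.ent R)
    (Γ : Set (Form V)) (hΓ : Γ = {φ | ∃ γ, R γ Form.bot ∧ φ = Form.not γ})
    (ent' : Set (Form V) → Form V → Prop)
    (hent' : ∀ X β, ent' X β ↔ E.ent (Γ ∪ X) β) :
    ((∀ α β, ent' {α} β → R α β) ∧
     (∀ α β γ, ent' {α} β → ent' {β} α → R α γ → R β γ) ∧
     (∀ α β γ, R α β → ent' ∅ (Form.imp β γ) → R α γ) ∧
     (∀ α, R α Form.bot → ent' {α} Form.bot)) ∧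
    IsPreferential ent' R ∧ ConsPres ent' R := by
  have hΓR : ∀ α, ∀ ψ ∈ Γ, R α ψ := by
    rintro α _ hψ
    rw [hΓ] at hψ
    obtain ⟨γ, hγ, rfl⟩ := hψ
    exact hR.not_of_bot hγ α
  have hSup : ∀ α β, ent' {α} β → R α β := fun α β h => by
    rw [hent', Set.union_singleton, E.deduction] at h
    exact hR.rightWeakening_of_premises (hΓR α) h (hR.refl α)
  have hLLE : ∀ α β γ, ent' {α} β → ent' {β} α → R α γ → R β γ := fun α β γ hαβ hβα =>
    hR.reciprocity (hSup α β hαβ) (hSup β α hβα)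
  have hRW : ∀ α β γ, R α β → ent' ∅ (Form.imp β γ) → R α γ := fun α β γ hαβ h => by
    rw [hent', Set.union_empty] at h
    exact hR.rightWeakening_of_premises (hΓR α) h hαβ
  have hCP : ConsPres ent' R := fun α hα => by
    rw [hent']
    refine E.includes_classical _ _ fun v hv => ?_
    have hnα : Form.eval v (Form.not α) = true := hv _ (Or.inl (hΓ ▸ ⟨α, hα, rfl⟩))
    have hα' : Form.eval v α = true := hv _ (Or.inr rfl)
    simp [Form.eval, hα'] at hnα
  exact ⟨⟨hSup, hLLE, hRW, hCP⟩, ⟨⟨hSup, hLLE, hRW, hR.1.2.2.2⟩, hR.2⟩, hCP⟩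
end

section
/- Let ≤ be a rational ordering on L. Then for every formula α ∈ L, either α ≤ β for all β ∈ L, or ¬α ≤ β for all β ∈ L. -/
/-! Since `α ∧ ¬α` classically entails every formula, Dominance puts it below everything;
Conjunctiveness puts `α` or `¬α` below `α ∧ ¬α`. -/

theorem Form.sem_and_not_self {V : Type} (α β : Form V) :
    Form.Sem {Form.and α (Form.not α)} β := by
  intro v hv
  have h := hv _ rfl
  simp [Form.eval] at h

theorem Entails.ent_and_not_self {V : Type} (E : Entails V) (α β : Form V) :
    E.ent {Form.and α (Form.not α)} β :=
  E.includes_classical _ _ (Form.sem_and_not_self α β)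

theorem IsRationalOrdering.le_of_le_of_ent {V : Type} {ent : Set (Form V) → Form V → Prop}
    {le : Form V → Form V → Prop} (hle : IsRationalOrdering ent le) {γ φ β : Form V}
    (hγ : le γ φ) (hφ : ent {φ} β) : le γ β :=
  hle.1 _ _ _ hγ (hle.2.1 _ _ hφ)

/-- for every α, either α is below everything, or ¬α is. -/
theorem stmt_4 {V : Type} (E : Entails V) (le : Form V → Form V → Prop)
    (hle : IsRationalOrdering E.ent le) (α : Form V) :
    (∀ β, le α β) ∨ (∀ β, le (Form.not α) β) := by
  rcases hle.2.2 α (Form.not α) with h | h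
  · exact .inl fun β => hle.le_of_le_of_ent h (E.ent_and_not_self α β)
  · exact .inr fun β => hle.le_of_le_of_ent h (E.ent_and_not_self α β)
end

section
/- Let |~ be a rational inference relation on L based on ⊢, and let ≤' = O(|~). If α |~ ⊥, then β ≤' ¬α for all β ∈ L. -/
theorem Form.sem_singleton_iff {V : Type} (α β : Form V) :
    Form.Sem {α} β ↔ ∀ v, α.eval v = true → β.eval v = true := by
  simp [Form.Sem]

section Inference

variable {V : Type} (E : Entails V) {R : Form V → Form V → Prop}

theorem IsInferenceRel.of_infer_bot (hR : IsInferenceRel E.ent R) {α : Form V}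
    (h : R α Form.bot) (γ : Form V) : R α γ :=
  hR.2.2.1 α Form.bot γ h <| E.includes_classical _ _ fun v _ => by simp [Form.eval]

theorem IsInferenceRel.congr_left_of_sem (hR : IsInferenceRel E.ent R) {α β γ : Form V}
    (hαβ : Form.Sem {α} β) (hβα : Form.Sem {β} α) (h : R α γ) : R β γ :=
  hR.2.1 α β γ (E.includes_classical _ _ hαβ) (E.includes_classical _ _ hβα) h

theorem IsPreferential.and_infer_bot (hR : IsPreferential E.ent R) {α : Form V}
    (h : R α Form.bot) (β : Form V) : R (Form.and α β) Form.bot :=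
  hR.2.2.1 α β Form.bot (hR.1.of_infer_bot E h β) h

/-- `¬(β ∧ ¬α) ∧ β` is classically equivalent to `α ∧ β`, which infers `⊥`; so by Cut,
`¬(β ∧ ¬α) |~ β` forces `¬(β ∧ ¬α) |~ ⊥`. -/
theorem IsPreferential.omap_not_of_infer_bot (hR : IsPreferential E.ent R) {α : Form V}
    (h : R α Form.bot) (β : Form V) : Omap R β (Form.not α) := by
  rw [Omap, or_iff_not_imp_right, not_not]
  intro hβ
  have hbot : R (Form.and (Form.not (Form.and β (Form.not α))) β) Form.bot := by
    refine hR.1.congr_left_of_sem E ?_ ?_ (hR.and_infer_bot E h β) <;>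
    · rw [Form.sem_singleton_iff]
      intro v
      simp only [Form.eval]
      cases α.eval v <;> cases β.eval v <;> decide
  exact hR.2.1 _ β _ hβ hbot

end Inference

/-- if `|~` is rational and `α |~ ⊥`, then `β O(|~) ¬α` for all β. -/
theorem stmt_5 {V : Type} (E : Entails V) (R : Form V → Form V → Prop)
    (hR : IsRational E.ent R) (α : Form V) (h : R α Form.bot) :
    ∀ β, Omap R β (Form.not α) :=
  hR.1.omap_not_of_infer_bot E h
end

section
/- Let |~ be a rational inference relation on L based on ⊢. Then O(|~) is a rational ordering on L, i.e., it satisfies Transitivity, Dominance, and Conjunctiveness. -/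
/-!
Read `¬(α ∧ β) |~ α` as "`¬β` is strictly more normal than `¬α`": the most normal worlds where
`α ∧ β` fails still satisfy `α`. So `α ≤ β` unless `¬β` is strictly more normal than `¬α` (the
absurd case set apart), and Dominance and Conjunctiveness follow from the basic rules alone.
Transitivity is the negative transitivity of "strictly more normal", and this is where Rational
Monotonicity enters. Let `U = ¬(α ∧ β ∧ γ)`; from `¬(α ∧ γ) |~ α` we get `U |~ α` by Or. If
`U |~ β`, Rational Monotonicity restricts this to `¬(β ∧ γ) |~ β`; if not, it restricts `U |~ α`
to `¬(α ∧ β) |~ α`.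
-/

variable {V : Type} {E : Entails V} {R : Form V → Form V → Prop}

namespace IsInferenceRel

theorem and_intro (hR : IsInferenceRel E.ent R) {a b c : Form V} (hb : R a b) (hc : R a c) :
    R a (b.and c) :=
  hR.2.2.2 a b c hb hc

theorem weaken_of_ent (hR : IsInferenceRel E.ent R) {a b c : Form V} (hab : R a b)
    (hbc : E.ent {b} c) : R a c :=
  hR.2.2.1 a b c hab ((E.deduction ∅ b c).mp (by rwa [insert_empty_eq]))

theorem of_eval_imp (hR : IsInferenceRel E.ent R) {a b : Form V}
    (h : ∀ v, a.eval v = true → b.eval v = true) : R a b :=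
  hR.1 a b (E.includes_classical _ _ fun v hv => h v (hv a rfl))

theorem refl (hR : IsInferenceRel E.ent R) (a : Form V) : R a a :=
  hR.of_eval_imp fun _ => id

theorem weaken (hR : IsInferenceRel E.ent R) {a b c : Form V} (hab : R a b)
    (h : ∀ v, b.eval v = true → c.eval v = true) : R a c :=
  hR.weaken_of_ent hab (E.includes_classical _ _ fun v hv => h v (hv b rfl))

theorem congr_left (hR : IsInferenceRel E.ent R) {a b c : Form V}
    (h : ∀ v, a.eval v = b.eval v) (hac : R a c) : R b c :=
  hR.2.1 a b c (E.includes_classical _ _ fun v hv => (h v).symm ▸ hv a rfl)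
    (E.includes_classical _ _ fun v hv => h v ▸ hv b rfl) hac

theorem of_bot (hR : IsInferenceRel E.ent R) {a c : Form V} (h : R a .bot) : R a c :=
  hR.weaken h fun v hv => by simp [Form.eval] at hv

theorem bot_of_inconsistent (hR : IsInferenceRel E.ent R) {d p q : Form V} (hp : R d p)
    (hq : R d q) (h : ∀ v, p.eval v = true → q.eval v = true → False) : R d .bot :=
  hR.weaken (hR.and_intro hp hq) fun v hv => by
    simp only [Form.eval, Bool.and_eq_true] at hv
    exact (h v hv.1 hv.2).elim

end IsInferenceRel

namespace IsPreferential

theorem cautious_mono (hR : IsPreferential E.ent R) {a b c : Form V} (hb : R a b)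
    (hc : R a c) : R (a.and b) c :=
  hR.2.2.1 a b c hb hc

theorem or_elim (hR : IsPreferential E.ent R) {a b c : Form V} (ha : R a c) (hb : R b c) :
    R (a.or b) c :=
  hR.2.2.2 a b c ha hb

theorem bot_of_eval_imp (hR : IsPreferential E.ent R) {a b : Form V} (ha : R a .bot)
    (h : ∀ v, b.eval v = true → a.eval v = true) : R b .bot := by
  have hI := hR.1
  have hba : R (b.or a) .bot := hI.congr_left (fun v => by grind [Form.eval]) ha
  have hbab : R ((b.or a).and b) .bot := hR.cautious_mono (hI.of_bot hba) hba
  exact hI.congr_left (fun v => by grind [Form.eval]) hbab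

theorem not_and_left (hR : IsPreferential E.ent R) {b : Form V} (c : Form V)
    (hb : R b.not .bot) : R (b.and c).not b := by
  have hI := hR.1
  have hbc : R (b.and (b.and c).not) b := hI.of_eval_imp fun v => by grind [Form.eval]
  exact hI.congr_left (fun v => by grind [Form.eval]) (hR.or_elim (hI.of_bot hb) hbc)

theorem not_and_right (hR : IsPreferential E.ent R) (b : Form V) {c : Form V}
    (hc : R c.not .bot) : R (b.and c).not c :=
  hR.1.congr_left (fun v => by grind [Form.eval]) (hR.not_and_left b hc)

end IsPreferential

namespace IsRational

theorem rational_mono (hR : IsRational E.ent R) {a b c : Form V} (hb : ¬ R a b.not)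
    (hc : R a c) : R (a.and b) c :=
  hR.2 a b c hb hc

theorem not_and_trans (hR : IsRational E.ent R) {α β γ : Form V}
    (hαγ : R (α.and γ).not α) (hαβ : ¬ R (α.and β).not α) : R (β.and γ).not β := by
  have hP := hR.1
  have hI := hP.1
  set U : Form V := ((α.and β).and γ).not
  have hUα : R U α := by
    have hα : R ((β.not.and α).and γ) α := hI.of_eval_imp fun v => by grind [Form.eval]
    exact hI.congr_left (fun v => by grind [Form.eval]) (hP.or_elim hαγ hα)
  by_cases hUβ : R U β
  · by_cases hUβγ : R U (β.and γ).not.not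
    · have hU : R U .bot :=
        hI.bot_of_inconsistent (hI.refl U) (hI.and_intro hUα hUβγ) fun v => by
          grind [Form.eval]
      exact hI.of_bot (hP.bot_of_eval_imp hU fun v => by grind [Form.eval])
    · exact hI.congr_left (fun v => by grind [Form.eval]) (hR.rational_mono hUβγ hUβ)
  · have hUαβ : ¬ R U (α.and β).not.not := fun h =>
      hUβ (hI.weaken h fun v => by grind [Form.eval])
    exact absurd (hI.congr_left (fun v => by grind [Form.eval]) (hR.rational_mono hUαβ hUα)) hαβ

end IsRational

namespace Omap

theorem trans (hR : IsRational E.ent R) {α β γ : Form V} (hαβ : Omap R α β)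
    (hβγ : Omap R β γ) : Omap R α γ := by
  have hP := hR.1
  have hI := hP.1
  by_cases hαγ : R (α.and γ).not α
  · left
    rcases hαβ with hαβ | hαβ <;> rcases hβγ with hβγ | hβγ
    · exact hP.bot_of_eval_imp (hP.or_elim hαβ hβγ) fun v => by grind [Form.eval]
    · have hβ : R β.not .bot := hP.bot_of_eval_imp hαβ fun v => by grind [Form.eval]
      exact absurd (hP.not_and_left γ hβ) hβγ
    · have hγ : R γ.not .bot := hP.bot_of_eval_imp hβγ fun v => by grind [Form.eval]
      exact hI.bot_of_inconsistent (hI.and_intro hαγ (hP.not_and_right α hγ)) (hI.refl _)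
        fun v => by grind [Form.eval]
    · exact absurd (hR.not_and_trans hαγ hαβ) hβγ
  · exact .inr hαγ

theorem of_ent (hR : IsInferenceRel E.ent R) {α β : Form V} (h : E.ent {α} β) :
    Omap R α β := by
  by_cases hα : R (α.and β).not α
  · exact .inl <| hR.bot_of_inconsistent (hR.and_intro hα (hR.weaken_of_ent hα h))
      (hR.refl _) fun v => by grind [Form.eval]
  · exact .inr hα

theorem left_or_right_le_and (hR : IsInferenceRel E.ent R) (α β : Form V) :
    Omap R α (α.and β) ∨ Omap R β (α.and β) := by
  by_cases hα : R (α.and (α.and β)).not α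
  · by_cases hβ : R (β.and (α.and β)).not β
    · have hβ' := hR.congr_left (b := (α.and (α.and β)).not) (fun v => by grind [Form.eval]) hβ
      exact .inl <| .inl <| hR.bot_of_inconsistent (hR.and_intro hα hβ') (hR.refl _)
        fun v => by grind [Form.eval]
    · exact .inr <| .inr hβ
  · exact .inl <| .inr hα

end Omap

/-- `O(|~)` of a rational inference relation is a rational ordering. -/
theorem stmt_10 {V : Type} (E : Entails V) (R : Form V → Form V → Prop)
    (hR : IsRational E.ent R) :
    IsRationalOrdering E.ent (Omap R) :=
  ⟨fun _ _ _ => Omap.trans hR, fun _ _ => Omap.of_ent hR.1.1,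
    Omap.left_or_right_le_and hR.1.1⟩
end

section
/- Let ≤ be a rational ordering on L. Then O(C(≤)) = ≤, i.e., for all formulas α, β ∈ L: α O(C(≤)) β if and only if α ≤ β. -/
/-! Since `⊢` need not be monotone or transitive, entailments are combined only through
Disjunction in premises, with both branches closed classically, and then carried into the
ordering by Dominance. Writing `μ = ¬(α ∧ β)`: `μ |~ ⊥` holds for `C(≤)` exactly when `¬μ` is
the top of `≤`, and otherwise `μ |~ α` holds exactly when `¬μ < α`. Since `¬μ` is classically
equivalent to `α ∧ β`, which is `≤`-equivalent to `α` precisely when `α ≤ β`, both sides of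
the theorem reduce to `α ≤ ¬μ`. -/

namespace Entails

variable {V : Type} (E : Entails V)

theorem ent_of_taut {φ ψ : Form V} (h : ∀ v, φ.eval v = true → ψ.eval v = true) :
    E.ent {φ} ψ :=
  E.includes_classical _ _ fun v hv => h v (hv φ rfl)

theorem ent_or {φ χ ψ : Form V} (h₁ : E.ent {φ} ψ) (h₂ : E.ent {χ} ψ) :
    E.ent {φ.or χ} ψ := by
  simpa using E.disj_prem ∅ φ χ ψ (by simpa using h₁) (by simpa using h₂)

theorem ent_imp_of_ent {φ ψ : Form V} (h : E.ent {φ} ψ) : E.ent {φ} (φ.imp ψ) := by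
  simpa using (E.deduction {φ} φ ψ).1 (by simpa using h)

theorem cmap_of_lt {le : Form V → Form V → Prop} {φ ψ : Form V} (h : ltOf le φ.not ψ) :
    Cmap E.ent le φ ψ :=
  Or.inr ⟨ψ, E.ent_of_taut fun v => by simp [Form.eval], h⟩

end Entails

namespace IsRationalOrdering

variable {V : Type} {E : Entails V} {le : Form V → Form V → Prop}

theorem trans (hle : IsRationalOrdering E.ent le) {α β γ : Form V} (h₁ : le α β)
    (h₂ : le β γ) : le α γ :=
  hle.1 α β γ h₁ h₂

theorem le_of_ent (hle : IsRationalOrdering E.ent le) {α β : Form V} (h : E.ent {α} β) :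
    le α β :=
  hle.2.1 α β h

theorem le_of_taut (hle : IsRationalOrdering E.ent le) {α β : Form V}
    (h : ∀ v, α.eval v = true → β.eval v = true) : le α β :=
  hle.le_of_ent (E.ent_of_taut h)

theorem le_and_of_le (hle : IsRationalOrdering E.ent le) {α β : Form V} (h : le α β) :
    le α (α.and β) :=
  (hle.2.2 α β).elim id (hle.trans h)

theorem le_not_not_and_iff (hle : IsRationalOrdering E.ent le) {α β : Form V} :
    le α (α.and β).not.not ↔ le α β := by
  constructor
  · intro h
    exact hle.trans h (hle.le_of_taut fun v => by simp [Form.eval])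
  · intro h
    exact hle.trans (hle.le_and_of_le h) (hle.le_of_taut fun v => by simp [Form.eval])

theorem le_of_ent_of_ent (hle : IsRationalOrdering E.ent le) {φ χ ψ x : Form V}
    (h₁ : E.ent {φ} ψ) (h₂ : E.ent {χ} ψ)
    (hx : ∀ v, x.eval v = true → (φ.or χ).eval v = true) : le x ψ :=
  hle.trans (hle.le_of_taut hx) (hle.le_of_ent (E.ent_or h₁ h₂))

theorem le_imp_of_ent (hle : IsRationalOrdering E.ent le) {φ ψ : Form V} (h : E.ent {φ} ψ)
    (γ : Form V) : le γ (φ.imp ψ) :=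
  hle.le_of_ent_of_ent (χ := φ.not) (E.ent_imp_of_ent h)
    (E.ent_of_taut fun v => by simp +contextual [Form.eval]) fun v => by simp [Form.eval]

theorem cmap_bot_iff (hle : IsRationalOrdering E.ent le) {φ : Form V} :
    Cmap E.ent le φ .bot ↔ ∀ γ, le γ φ.not := by
  refine ⟨?_, Or.inl⟩
  rintro (htop | ⟨x, hent, -, hnot⟩)
  · exact htop
  intro γ
  -- `τ` is `≤`-maximal, and Conjunctiveness puts `τ` or `x` below `x ∧ τ ⊨ ¬φ`.
  set τ := (φ.and x).imp .bot
  have hxτ : le (x.and τ) φ.not := hle.le_of_taut fun v => by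
    simp only [τ, Form.eval]; cases φ.eval v <;> cases x.eval v <;> simp
  rcases hle.2.2 x τ with hx | hτ
  · exact absurd (hle.trans hx hxτ) hnot
  · exact hle.trans (hle.le_imp_of_ent hent γ) (hle.trans hτ hxτ)

theorem cmap_iff_lt (hle : IsRationalOrdering E.ent le) {φ ψ : Form V}
    (hψ : ∀ v, φ.not.eval v = true → ψ.eval v = true) (htop : ¬ ∀ γ, le γ φ.not) :
    Cmap E.ent le φ ψ ↔ ltOf le φ.not ψ := by
  refine ⟨?_, E.cmap_of_lt⟩
  rintro (htop' | ⟨x, hent, hφx, hnot⟩)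
  · exact absurd htop' htop
  have hxψ : le x ψ := by
    refine hle.le_of_ent_of_ent (χ := φ.not.and x) hent (E.ent_of_taut fun v hv => ?_)
      fun v => ?_
    · simp only [Form.eval, Bool.and_eq_true] at hv
      exact hψ v hv.1
    · simp only [Form.eval]; cases φ.eval v <;> cases x.eval v <;> simp
  exact ⟨hle.trans hφx hxψ, fun hψφ => hnot (hle.trans hxψ hψφ)⟩

end IsRationalOrdering

/-- `O(C(≤)) = ≤` for a rational ordering. -/
theorem stmt_12 {V : Type} (E : Entails V) (le : Form V → Form V → Prop)
    (hle : IsRationalOrdering E.ent le) :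
    ∀ α β, Omap (Cmap E.ent le) α β ↔ le α β := by
  intro α β
  rw [Omap, hle.cmap_bot_iff, ← hle.le_not_not_and_iff]
  by_cases htop : ∀ γ, le γ (α.and β).not.not
  · simp only [htop, implies_true, true_or]
  · have hsem : ∀ v, (α.and β).not.not.eval v = true → α.eval v = true := fun v => by
      simp only [Form.eval]; cases α.eval v <;> cases β.eval v <;> simp
    rw [hle.cmap_iff_lt hsem htop, ltOf, not_and_not_right]
    simp only [htop, false_or, hle.le_of_taut hsem, true_implies]
end
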